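/- Let G be a finite simple graph with positive integer edge weights, base ⊆ V a set of vertices, R a set of positive integers (radii) such that for all distinct vertices s,d of G in the same connected component there exists r ∈ R with r < d_G(s,d) ≤ 2r, and for each r ∈ R a set cover_r ⊆ V that intersects the vertex set of every shortest path P in G with r < |P| ≤ 2r whose vertex set is disjoint from base. Define hubs(u) = base ∪ ⋃_{r ∈ R} (N_{2r}^{G∖base}(u) ∩ cover_r) for each vertex u. Then for all distinct vertices s,d in the same connected component, the set {d_G(s,w) + d_G(w,d) : w ∈ hubs(s) ∩ hubs(d), w in the same component as s and d} is nonempty and its minimum equals d_G(s,d). -/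

import Mathlib

open SimpleGraph

/-- The weight of a walk: the sum of the weights of its edges (darts). -/
def walkWeight {V : Type*} {G : SimpleGraph V} (wt : V → V → ℕ) {u v : V}
    (p : G.Walk u v) : ℕ :=
  (p.darts.map fun d => wt d.toProd.1 d.toProd.2).sum

/-- The weighted distance: the minimum weight of a walk from `u` to `v`. -/
noncomputable def wdist {V : Type*} (G : SimpleGraph V) (wt : V → V → ℕ) (u v : V) : ℕ :=
  sInf {n | ∃ p : G.Walk u v, walkWeight wt p = n}

/-- The subgraph of `G` induced on the complement of `S` (vertices of `S` are isolated). -/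
def delVerts {V : Type*} (G : SimpleGraph V) (S : Set V) : SimpleGraph V where
  Adj a b := G.Adj a b ∧ a ∉ S ∧ b ∉ S
  symm := by constructor; intro a b h; exact ⟨h.1.symm, h.2.2, h.2.1⟩
  loopless := by constructor; intro a h; exact G.irrefl h.1

/-- The ball `N_x^{G∖S}(u)`: vertices of `G∖S` at `wdist` at most `x` from `u` in `G∖S`. -/
def ball {V : Type*} (G : SimpleGraph V) (wt : V → V → ℕ) (S : Set V) (u : V)
    (x : ℕ) : Set V :=
  {v | (delVerts G S).Reachable u v ∧ wdist (delVerts G S) wt u v ≤ x}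

/-- The hub set `hubs(u) = base ∪ ⋃_{r ∈ R} (N_{2r}^{G∖base}(u) ∩ cover_r)`. -/
def hubs {V : Type*} (G : SimpleGraph V) (wt : V → V → ℕ) (base : Set V) (R : Set ℕ)
    (cover : ℕ → Set V) (u : V) : Set V :=
  base ∪ ⋃ r ∈ R, ball G wt base u (2 * r) ∩ cover r

set_option linter.unusedSectionVars false

section helpers
variable {V : Type*} [DecidableEq V] {G : SimpleGraph V} {wt : V → V → ℕ}

lemma walkWeight_cons {u v w : V} (h : G.Adj u v) (p : G.Walk v w) :
    walkWeight wt (Walk.cons h p) = wt u v + walkWeight wt p := by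
  simp [walkWeight]

lemma walkWeight_append {u v w : V} (p : G.Walk u v) (q : G.Walk v w) :
    walkWeight wt (p.append q) = walkWeight wt p + walkWeight wt q := by
  simp [walkWeight, Walk.darts_append]

lemma walkWeight_reverse (hsymm : ∀ a b, wt a b = wt b a) {u v : V} (p : G.Walk u v) :
    walkWeight wt p.reverse = walkWeight wt p := by
  unfold walkWeight
  rw [Walk.darts_reverse, List.map_reverse, List.sum_reverse, List.map_map]
  congr 1
  refine List.map_congr_left fun d _ => ?_
  simp [Dart.symm, hsymm d.toProd.1 d.toProd.2]

lemma wdist_le_walkWeight {u v : V} (p : G.Walk u v) :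
    wdist G wt u v ≤ walkWeight wt p := Nat.sInf_le ⟨p, rfl⟩

lemma exists_walk_eq_wdist {u v : V} (h : G.Reachable u v) :
    ∃ p : G.Walk u v, walkWeight wt p = wdist G wt u v := by
  have hne : {n | ∃ p : G.Walk u v, walkWeight wt p = n}.Nonempty :=
    h.elim fun p => ⟨walkWeight wt p, p, rfl⟩
  exact Nat.sInf_mem hne

lemma wdist_triangle {u v w : V} (h1 : G.Reachable u v) (h2 : G.Reachable v w) :
    wdist G wt u w ≤ wdist G wt u v + wdist G wt v w := by
  obtain ⟨p, hp⟩ := exists_walk_eq_wdist (wt := wt) h1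
  obtain ⟨q, hq⟩ := exists_walk_eq_wdist (wt := wt) h2
  calc wdist G wt u w ≤ walkWeight wt (p.append q) := wdist_le_walkWeight _
    _ = _ := by rw [walkWeight_append, hp, hq]

lemma walkWeight_dropUntil_le {u v w : V} (p : G.Walk u v) (h : w ∈ p.support) :
    walkWeight wt (p.dropUntil w h) ≤ walkWeight wt p := by
  conv_rhs => rw [← p.take_spec h]
  rw [walkWeight_append]
  omega

lemma walkWeight_bypass_le {u v : V} (p : G.Walk u v) :
    walkWeight wt p.bypass ≤ walkWeight wt p := by
  induction p with
  | nil => simp [Walk.bypass]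
  | @cons a b c h p ih =>
    simp only [Walk.bypass]
    split_ifs with hb
    · calc walkWeight wt (p.bypass.dropUntil a hb) ≤ walkWeight wt p.bypass :=
            walkWeight_dropUntil_le _ _
        _ ≤ walkWeight wt p := ih
        _ ≤ walkWeight wt (Walk.cons h p) := by rw [walkWeight_cons]; omega
    · rw [walkWeight_cons, walkWeight_cons]
      omega

lemma exists_path_eq_wdist {u v : V} (h : G.Reachable u v) :
    ∃ p : G.Walk u v, p.IsPath ∧ walkWeight wt p = wdist G wt u v := by
  obtain ⟨p, hp⟩ := exists_walk_eq_wdist (wt := wt) h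
  exact ⟨p.bypass, p.bypass_isPath,
    le_antisymm (hp ▸ walkWeight_bypass_le p) (wdist_le_walkWeight _)⟩

lemma key_on_walk {s d x : V} (P : G.Walk s d)
    (hP : walkWeight wt P = wdist G wt s d) (hx : x ∈ P.support) :
    wdist G wt s x + wdist G wt x d = wdist G wt s d := by
  refine le_antisymm ?_ (wdist_triangle ⟨P.takeUntil x hx⟩ ⟨P.dropUntil x hx⟩)
  calc wdist G wt s x + wdist G wt x d
      ≤ walkWeight wt (P.takeUntil x hx) + walkWeight wt (P.dropUntil x hx) :=
        Nat.add_le_add (wdist_le_walkWeight _) (wdist_le_walkWeight _)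
    _ = walkWeight wt P := by rw [← walkWeight_append, P.take_spec hx]
    _ = _ := hP

lemma exists_delVerts_walk {S : Set V} :
    ∀ {u v : V} (p : G.Walk u v), (∀ x ∈ p.support, x ∉ S) →
      ∃ q : (delVerts G S).Walk u v, walkWeight wt q = walkWeight wt p := by
  intro u v p
  induction p with
  | nil => exact fun _ => ⟨Walk.nil, rfl⟩
  | @cons a b c h p ih =>
    intro hs
    obtain ⟨q, hq⟩ := ih (fun x hx => hs x (List.mem_cons_of_mem _ hx))
    exact ⟨Walk.cons (show (delVerts G S).Adj a b from ⟨h, hs a (by simp), hs b (by simp)⟩) q, by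
      rw [walkWeight_cons, walkWeight_cons, hq]⟩

end helpers

theorem stmt11 {V : Type*} [Fintype V] (G : SimpleGraph V) (wt : V → V → ℕ)
    (hsymm : ∀ a b, wt a b = wt b a)
    (hpos : ∀ a b, G.Adj a b → 0 < wt a b)
    (base : Set V) (R : Set ℕ) (hRpos : ∀ r ∈ R, 0 < r)
    (hR : ∀ s d : V, s ≠ d → G.Reachable s d →
      ∃ r ∈ R, r < wdist G wt s d ∧ wdist G wt s d ≤ 2 * r)
    (cover : ℕ → Set V)
    (hcover : ∀ r ∈ R, ∀ (a b : V) (P : G.Walk a b), P.IsPath →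
      walkWeight wt P = wdist G wt a b →
      r < walkWeight wt P → walkWeight wt P ≤ 2 * r →
      (∀ x ∈ P.support, x ∉ base) →
      ∃ x ∈ P.support, x ∈ cover r)
    (s d : V) (hsd : s ≠ d) (hreach : G.Reachable s d) :
    {n | ∃ x ∈ hubs G wt base R cover s ∩ hubs G wt base R cover d,
        G.Reachable s x ∧ G.Reachable x d ∧
        n = wdist G wt s x + wdist G wt x d}.Nonempty ∧
    sInf {n | ∃ x ∈ hubs G wt base R cover s ∩ hubs G wt base R cover d,
        G.Reachable s x ∧ G.Reachable x d ∧
        n = wdist G wt s x + wdist G wt x d} = wdist G wt s d := by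
  classical
  obtain ⟨P, hPpath, hPw⟩ := exists_path_eq_wdist (wt := wt) hreach
  have hmain : ∃ x ∈ hubs G wt base R cover s ∩ hubs G wt base R cover d,
      G.Reachable s x ∧ G.Reachable x d ∧
      wdist G wt s x + wdist G wt x d = wdist G wt s d := by
    by_cases hbase : ∀ x ∈ P.support, x ∉ base
    · obtain ⟨r, hrR, hr1, hr2⟩ := hR s d hsd hreach
      obtain ⟨x, hxsup, hxcov⟩ := hcover r hrR s d P hPpath hPw
        (by rw [hPw]; exact hr1) (by rw [hPw]; exact hr2) hbase
      obtain ⟨q1, hq1⟩ := exists_delVerts_walk (wt := wt) (S := base) (P.takeUntil x hxsup)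
        (fun y hy => hbase y (P.support_takeUntil_subset hxsup hy))
      obtain ⟨q2, hq2⟩ := exists_delVerts_walk (wt := wt) (S := base) (P.dropUntil x hxsup)
        (fun y hy => hbase y (P.support_dropUntil_subset hxsup hy))
      have hw : walkWeight wt (P.takeUntil x hxsup) + walkWeight wt (P.dropUntil x hxsup)
          = walkWeight wt P := by
        rw [← walkWeight_append, P.take_spec hxsup]
      have hD2r : walkWeight wt P ≤ 2 * r := by rw [hPw]; exact hr2
      have hballs : x ∈ ball G wt base s (2 * r) := by
        refine ⟨⟨q1⟩, le_trans (wdist_le_walkWeight q1) ?_⟩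
        rw [hq1]; omega
      have hballd : x ∈ ball G wt base d (2 * r) := by
        refine ⟨⟨q2.reverse⟩, le_trans (wdist_le_walkWeight q2.reverse) ?_⟩
        rw [walkWeight_reverse hsymm, hq2]; omega
      refine ⟨x, ⟨?_, ?_⟩, ⟨P.takeUntil x hxsup⟩, ⟨P.dropUntil x hxsup⟩,
        key_on_walk P hPw hxsup⟩
      · exact Or.inr (Set.mem_biUnion hrR ⟨hballs, hxcov⟩)
      · exact Or.inr (Set.mem_biUnion hrR ⟨hballd, hxcov⟩)
    · push_neg at hbase
      obtain ⟨w, hwsup, hwbase⟩ := hbase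
      exact ⟨w, ⟨Or.inl hwbase, Or.inl hwbase⟩, ⟨P.takeUntil w hwsup⟩,
        ⟨P.dropUntil w hwsup⟩, key_on_walk P hPw hwsup⟩
  obtain ⟨x, hx, hrs, hrd, heq⟩ := hmain
  have hmem : wdist G wt s d ∈ {n | ∃ x ∈ hubs G wt base R cover s ∩ hubs G wt base R cover d,
      G.Reachable s x ∧ G.Reachable x d ∧ n = wdist G wt s x + wdist G wt x d} :=
    ⟨x, hx, hrs, hrd, heq.symm⟩
  have hne : _ := Set.nonempty_of_mem hmem
  refine ⟨hne, le_antisymm (Nat.sInf_le hmem) ?_⟩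
  obtain ⟨y, hy, hys, hyd, hyeq⟩ := Nat.sInf_mem hne
  rw [hyeq]
  exact wdist_triangle hys hyd
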